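/- arXiv:math/0602219 — 5 statements merged into one kernel-verified Lean document; each statement's English description precedes it below -/
import Mathlib

section
/- Let μ be a probability measure on ℝ with Im F_μ(i) - 1 = σ(ℝ) where F_μ(z) = b + z + ∫(1+uz)/(u-z) dσ(u) is its Nevanlinna representation. Suppose ε := ∫ u²/(1+u²) dμ(u) satisfies -Im G_μ(i) = 1 - ε (automatic) and ε ≤ 1/2. Then σ(ℝ) ≤ 2ε. -/
open MeasureTheory Complex

set_option maxHeartbeats 1000000

theorem nevanlinna_measure_total_mass_bound
    (μ : Measure ℝ) [IsProbabilityMeasure μ]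
    (b : ℝ) (σ : Measure ℝ) [IsFiniteMeasure σ]
    (hrep : ∀ z : ℂ, 0 < z.im →
      (∫ t : ℝ, (z - (t : ℂ))⁻¹ ∂μ)⁻¹
        = (b : ℂ) + z + ∫ u : ℝ, (1 + (u : ℂ) * z) / ((u : ℂ) - z) ∂σ)
    (hε : (∫ u : ℝ, u ^ 2 / (1 + u ^ 2) ∂μ) ≤ 1 / 2) :
    (σ Set.univ).toReal ≤ 2 * ∫ u : ℝ, u ^ 2 / (1 + u ^ 2) ∂μ := by
  set ε : ℝ := ∫ u : ℝ, u ^ 2 / (1 + u ^ 2) ∂μ with hεdef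
  set s : ℝ := (σ Set.univ).toReal with hsdef
  have hpos : ∀ t : ℝ, (0:ℝ) < 1 + t ^ 2 := fun t => by positivity
  have hcont1 : Continuous (fun t : ℝ => 1 / (1 + t ^ 2)) :=
    continuous_const.div (by continuity) (fun t => (hpos t).ne')
  have hint1 : Integrable (fun t : ℝ => 1 / (1 + t ^ 2)) μ := by
    refine (integrable_const (1:ℝ)).mono' hcont1.aestronglyMeasurable ?_
    filter_upwards with t
    rw [Real.norm_eq_abs, _root_.abs_of_pos (by positivity)]
    rw [div_le_one (hpos t)]; nlinarith [sq_nonneg t]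
  have hcont2 : Continuous (fun t : ℝ => t ^ 2 / (1 + t ^ 2)) :=
    (continuous_pow 2).div (by continuity) (fun t => (hpos t).ne')
  have hint2 : Integrable (fun t : ℝ => t ^ 2 / (1 + t ^ 2)) μ := by
    refine (integrable_const (1:ℝ)).mono' hcont2.aestronglyMeasurable ?_
    filter_upwards with t
    rw [Real.norm_eq_abs, _root_.abs_of_nonneg (by positivity)]
    rw [div_le_one (hpos t)]; nlinarith [sq_nonneg t]
  have hne : ∀ t : ℝ, (Complex.I - (t:ℂ)) ≠ 0 := by
    intro t h
    have := congrArg Complex.im h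
    simp at this
  have hcontf : Continuous (fun t : ℝ => (Complex.I - (t:ℂ))⁻¹) :=
    (continuous_const.sub Complex.continuous_ofReal).inv₀ hne
  have hintf : Integrable (fun t : ℝ => (Complex.I - (t:ℂ))⁻¹) μ := by
    refine (integrable_const (1:ℝ)).mono' hcontf.aestronglyMeasurable ?_
    filter_upwards with t
    rw [norm_inv]
    have h1 : (1:ℝ) ≤ ‖Complex.I - (t:ℂ)‖ := by
      have := Complex.abs_im_le_norm (Complex.I - (t:ℂ))
      simpa using this
    rw [inv_le_one_iff₀]; right; exact h1
  have hone : (∫ _ : ℝ, (1:ℝ) ∂μ) = 1 := by simp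
  have hsum : (∫ t : ℝ, (1 / (1 + t ^ 2) + t ^ 2 / (1 + t ^ 2)) ∂μ) = 1 := by
    rw [← hone]
    congr 1
    funext t
    field_simp
  have hc : (∫ t : ℝ, 1 / (1 + t ^ 2) ∂μ) = 1 - ε := by
    have := integral_add hint1 hint2 (μ := μ)
    rw [hsum] at this
    linarith [this]
  set c : ℝ := 1 - ε with hcdef
  set a : ℝ := ∫ t : ℝ, t / (1 + t ^ 2) ∂μ with hadef
  have hint3 : Integrable (fun t : ℝ => t / (1 + t ^ 2)) μ := by
    refine (integrable_const (1:ℝ)).mono' ((continuous_id.div (by continuity)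
      (fun t => (hpos t).ne')).aestronglyMeasurable) ?_
    filter_upwards with t
    rw [Real.norm_eq_abs, abs_div, _root_.abs_of_pos (hpos t), div_le_one (hpos t)]
    nlinarith [sq_nonneg (|t| - 1), abs_nonneg t, _root_.sq_abs t]
  have hre : ∀ t : ℝ, ((Complex.I - (t:ℂ))⁻¹).re = -(t / (1 + t ^ 2)) := by
    intro t
    rw [Complex.inv_re]
    simp [Complex.normSq_apply]
    ring
  have him : ∀ t : ℝ, ((Complex.I - (t:ℂ))⁻¹).im = -(1 / (1 + t ^ 2)) := by
    intro t
    rw [Complex.inv_im]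
    simp [Complex.normSq_apply]
    ring
  set G : ℂ := ∫ t : ℝ, (Complex.I - (t:ℂ))⁻¹ ∂μ with hGdef
  have hGre : G.re = -a := by
    have h := integral_re hintf
    simp only [RCLike.re_to_complex] at h
    rw [hGdef, ← h]
    simp_rw [hre]
    rw [integral_neg]
  have hGim : G.im = -c := by
    have h := integral_im hintf
    simp only [RCLike.im_to_complex] at h
    rw [hGdef, ← h]
    simp_rw [him]
    rw [integral_neg, hc]
  have hconst : ∀ u : ℝ, (1 + (u : ℂ) * Complex.I) / ((u : ℂ) - Complex.I) = Complex.I := by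
    intro u
    have hne2 : (u : ℂ) - Complex.I ≠ 0 := by
      intro h
      have := congrArg Complex.im h
      simp at this
    rw [div_eq_iff hne2]
    ring_nf
    rw [Complex.I_sq]
    ring
  have hRHS : (∫ u : ℝ, (1 + (u : ℂ) * Complex.I) / ((u : ℂ) - Complex.I) ∂σ)
      = (s : ℂ) * Complex.I := by
    simp_rw [hconst]
    rw [integral_const]
    rw [Complex.real_smul, hsdef]
    rfl
  have hrepI := hrep Complex.I (by simp)
  rw [hRHS] at hrepI
  have hGinv_im : (G⁻¹).im = 1 + s := by
    rw [← hGdef] at hrepI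
    have := congrArg Complex.im hrepI
    simpa using this
  have hinv : (G⁻¹).im = -G.im / Complex.normSq G := Complex.inv_im G
  have hnsq : Complex.normSq G = a ^ 2 + c ^ 2 := by
    rw [Complex.normSq_apply, hGre, hGim]; ring
  rw [hGim, hnsq, hGinv_im] at hinv
  rw [neg_neg] at hinv
  have key : c / (a ^ 2 + c ^ 2) = 1 + s := hinv.symm
  have hε0 : 0 ≤ ε := by
    rw [hεdef]
    exact integral_nonneg fun t => by positivity
  have hcge : (1:ℝ)/2 ≤ c := by rw [hcdef]; linarith
  have hs0 : 0 ≤ s := ENNReal.toReal_nonneg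
  have hden : (0:ℝ) < a ^ 2 + c ^ 2 := by nlinarith
  have hq : (1 + s) * (a ^ 2 + c ^ 2) = c := by
    rw [← key, div_mul_cancel₀ _ hden.ne']
  show s ≤ 2 * ε
  have hcε : ε = 1 - c := by rw [hcdef]; ring
  rw [hcε]
  clear_value a s c ε
  clear hrep hrepI hRHS hGinv_im hinv hnsq hGre hGim key hc hsum
  have hc0 : (0:ℝ) < c := by linarith
  have h1 : (1 + s) * c ^ 2 ≤ c := by
    nlinarith [mul_nonneg (by linarith : (0:ℝ) ≤ 1 + s) (sq_nonneg a)]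
  have h2 : s * c ≤ 1 - c := by
    by_contra h
    push_neg at h
    nlinarith [mul_lt_mul_of_pos_right h hc0]
  have h3 : s * (1/2) ≤ s * c := mul_le_mul_of_nonneg_left hcge hs0
  linarith
end

section
/- Let Z ∈ 𝓕 (i.e., Z : ℂ⁺ → ℂ⁺ analytic with Im Z(z) ≥ Im z, admitting representation Z(z) = d + z + ∫(1+uz)/(u-z) dν(u)). If |Z(z) - z| ≤ C·(1 + |z|²)/Im z for all z ∈ ℂ⁺ with C ≥ 1, then (1 + |Z(z)|²)/Im Z(z) ≤ c(C)·(1/Im z)·((1 + |z|²)/Im z)², where c(C) depends only on C. -/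
open MeasureTheory Complex

theorem Q_composition_bound (C : ℝ) (hC : 1 ≤ C) :
    ∃ c : ℝ, 0 < c ∧
      ∀ Z : ℂ → ℂ,
        DifferentiableOn ℂ Z {z : ℂ | 0 < z.im} →
        (∀ z : ℂ, 0 < z.im → z.im ≤ (Z z).im) →
        (∀ z : ℂ, 0 < z.im →
          ‖Z z - z‖ ≤ C * (1 + ‖z‖ ^ 2) / z.im) →
        ∀ z : ℂ, 0 < z.im →
          (1 + ‖Z z‖ ^ 2) / (Z z).im
            ≤ c * (1 / z.im) * ((1 + ‖z‖ ^ 2) / z.im) ^ 2 := by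
  refine ⟨8 * C ^ 2, by positivity, ?_⟩
  intro Z _ him hbd z hz
  set y := z.im with hy
  set a := ‖z‖ with ha
  set A := ‖Z z‖ with hA
  have hya : y ≤ a := (Complex.abs_im_le_norm z).trans' (le_abs_self _)
  have ha0 : (0:ℝ) ≤ a := norm_nonneg z
  have hA0 : (0:ℝ) ≤ A := norm_nonneg _
  have hAle : A ≤ a + C * (1 + a ^ 2) / y := by
    calc A = ‖z + (Z z - z)‖ := by ring_nf; rfl
    _ ≤ a + ‖Z z - z‖ := norm_add_le _ _
    _ ≤ a + C * (1 + a ^ 2) / y := by linarith [hbd z hz]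
  have hImZ : y ≤ (Z z).im := him z hz
  have hImZ0 : 0 < (Z z).im := lt_of_lt_of_le hz hImZ
  have step1 : (1 + A ^ 2) / (Z z).im ≤ (1 + A ^ 2) / y :=
    div_le_div_of_nonneg_left (by positivity) hz hImZ
  refine step1.trans ?_
  rw [div_le_iff₀ hz] at *
  have key : (1 + A ^ 2) ≤ 8 * C ^ 2 * (1 + a ^ 2) ^ 2 / y ^ 2 := by
    rw [le_div_iff₀ (by positivity)]
    have h1 : A * y ≤ a * y + C * (1 + a ^ 2) := by
      have := mul_le_mul_of_nonneg_right hAle hz.le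
      calc A * y ≤ (a + C * (1 + a ^ 2) / y) * y := this
        _ = a * y + C * (1 + a ^ 2) := by field_simp
    have e0 : (0:ℝ) ≤ 1 + a ^ 2 := by positivity
    have hC0 : (0:ℝ) ≤ C := by linarith
    have h3 : a * y ≤ a * a := mul_le_mul_of_nonneg_left hya ha0
    have hABound : A * y ≤ 2 * C * (1 + a ^ 2) := by
      nlinarith [mul_le_mul_of_nonneg_right hC e0, h3]
    have hsq : (A * y) ^ 2 ≤ (2 * C * (1 + a ^ 2)) ^ 2 := by
      have hAy : (0:ℝ) ≤ A * y := by positivity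
      nlinarith
    have hy2 : y ^ 2 ≤ C ^ 2 * (1 + a ^ 2) ^ 2 := by
      have hCC : (1:ℝ) ≤ C * C := by nlinarith
      nlinarith [mul_le_mul hya hya hz.le ha0, sq_nonneg (1 + a ^ 2), sq_nonneg a,
        mul_nonneg (sq_nonneg (1 + a ^ 2)) (by nlinarith : (0:ℝ) ≤ C * C - 1)]
    nlinarith [hsq, hy2, mul_nonneg (sq_nonneg C) (sq_nonneg (1 + a ^ 2))]
  calc 1 + A ^ 2 ≤ 8 * C ^ 2 * (1 + a ^ 2) ^ 2 / y ^ 2 := key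
    _ = 8 * C ^ 2 * (1 / y) * ((1 + a ^ 2) / y) ^ 2 * y := by field_simp
end

section
/- The function ρ(z) = z² - 4 + 4r(z), where r is analytic on ℂ⁺ₐ = {Im z > a} and S is analytic on ℂ⁺ₐ satisfying S(z)² - z S(z) + 1 - r(z) = 0 and Im S(z) ≥ Im z there, has no zero in ℂ⁺ₐ. -/
open Complex

theorem rho_no_zero_in_upper_halfplane
    (a : ℝ) (ha : 0 < a) (r S : ℂ → ℂ)
    (hr : DifferentiableOn ℂ r {z : ℂ | a < z.im})
    (hS : DifferentiableOn ℂ S {z : ℂ | a < z.im})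
    (heq : ∀ z : ℂ, a < z.im → S z ^ 2 - z * S z + (1 - r z) = 0)
    (him : ∀ z : ℂ, a < z.im → z.im ≤ (S z).im) :
    ∀ w : ℂ, a < w.im → w ^ 2 - 4 + 4 * r w ≠ 0 := by
  intro w hw h0
  have hq := heq w hw
  have hsq : (S w - w / 2) ^ 2 = 0 := by
    have : r w = 1 - w ^ 2 / 4 := by linear_combination h0 / 4
    rw [this] at hq
    linear_combination hq
  have hS2 : S w = w / 2 := by
    have := pow_eq_zero_iff (n := 2) (by norm_num) |>.mp hsq
    exact sub_eq_zero.mp this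
  have him' := him w hw
  rw [hS2] at him'
  have h2 : (w / 2).im = w.im / 2 := by
    simpa using Complex.smul_im (1/2 : ℝ) w ▸ (by push_cast; ring_nf : w / 2 = (1/2 : ℝ) • w) ▸ rfl
  rw [h2] at him'
  linarith
end

section
/- For z ∈ ℂ with 0 < Im z ≤ 1, one has |z² - 4| ≥ max{Im z, ((Re z)² - 5)₊}, where (x)₊ = max{x, 0}. -/
open Complex

theorem abs_sq_sub_four_lower_bound (z : ℂ) (h0 : 0 < z.im) (h1 : z.im ≤ 1) :
    max z.im (max (z.re ^ 2 - 5) 0) ≤ ‖z ^ 2 - 4‖ := by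
  set x := z.re
  set y := z.im
  have hre : (z ^ 2 - 4).re = x ^ 2 - y ^ 2 - 4 := by
    simp [pow_two, Complex.mul_re, x, y]
  have him : (z ^ 2 - 4).im = 2 * x * y := by
    simp [pow_two, Complex.mul_im, x, y]; ring
  have hsq : (‖z ^ 2 - 4‖) ^ 2 = (x ^ 2 - y ^ 2 - 4) ^ 2 + (2 * x * y) ^ 2 := by
    rw [Complex.sq_norm, Complex.normSq_apply, hre, him]; ring
  have key : ∀ a : ℝ, 0 ≤ a → a ^ 2 ≤ (x ^ 2 - y ^ 2 - 4) ^ 2 + (2 * x * y) ^ 2 →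
      a ≤ ‖z ^ 2 - 4‖ := by
    intro a ha h
    nlinarith [norm_nonneg (z ^ 2 - 4), hsq]
  refine max_le ?_ (max_le ?_ (norm_nonneg _))
  · exact key y h0.le (by nlinarith [sq_nonneg (x ^ 2 - 4 + y ^ 2), sq_nonneg y])
  · rcases le_or_gt (x ^ 2 - 5) 0 with h | h
    · exact h.trans (norm_nonneg _)
    · exact key _ h.le (by nlinarith)
end

section
/- Let μ be a probability measure on ℝ, y > 0 and a > 0. Then -(1/π) ∫_{|x| ≤ a} Im G_μ(x + iy) dx = (1/π) ∫_ℝ (arctan((a-u)/y) + arctan((a+u)/y)) dμ(u), and this quantity is at most μ({u : |u| ≤ 2a}) + 1 - (1/π)·arctan(a/y). -/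
open MeasureTheory Complex Real

private lemma imch_inner_int (y : ℝ) (hy : 0 < y) (a t : ℝ) (ha : 0 < a) :
    ∫ x in Set.Icc (-a) a, y / ((x - t)^2 + y^2)
      = Real.arctan ((a - t) / y) + Real.arctan ((a + t) / y) := by
  have hle : (-a : ℝ) ≤ a := by linarith
  have hcont : Continuous fun x : ℝ => y / ((x - t)^2 + y^2) := by
    apply Continuous.div continuous_const (by continuity)
    intro x; positivity
  rw [MeasureTheory.integral_Icc_eq_integral_Ioc, ← intervalIntegral.integral_of_le hle]
  have key : ∫ x in (-a)..a, y / ((x - t)^2 + y^2)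
      = Real.arctan ((a - t)/y) - Real.arctan ((-a - t)/y) := by
    have : ∀ x ∈ Set.uIcc (-a) a, HasDerivAt (fun x => Real.arctan ((x - t)/y))
        (y / ((x - t)^2 + y^2)) x := by
      intro x _
      have h1 : HasDerivAt (fun x : ℝ => (x - t)/y) (1/y) x := by
        simpa using ((hasDerivAt_id x).sub_const t).div_const y
      have h2 := (Real.hasDerivAt_arctan ((x - t)/y)).comp x h1
      refine h2.congr_deriv ?_
      field_simp
      ring
    rw [intervalIntegral.integral_eq_sub_of_hasDerivAt this (hcont.intervalIntegrable _ _)]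
  rw [key]
  rw [show (-a - t)/y = -((a + t)/y) by ring, Real.arctan_neg]
  ring

private lemma imch_im_inv (x t y : ℝ) :
    (((x : ℂ) + Complex.I * y - (t : ℂ))⁻¹).im = -(y / ((x - t)^2 + y^2)) := by
  have hre : ((x : ℂ) + Complex.I * y - (t : ℂ)).re = x - t := by simp
  have him : ((x : ℂ) + Complex.I * y - (t : ℂ)).im = y := by simp
  rw [Complex.inv_im, him, Complex.normSq_apply, hre, him]
  rw [neg_div]
  ring_nf

private lemma imch_integrable_inv (μ : Measure ℝ) [IsProbabilityMeasure μ] (x y : ℝ) (hy : 0 < y) :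
    Integrable (fun t : ℝ => (((x : ℂ) + Complex.I * y - (t : ℂ))⁻¹)) μ := by
  have hne : ∀ t : ℝ, ((x : ℂ) + Complex.I * y - (t : ℂ)) ≠ 0 := by
    intro t h
    have : ((x : ℂ) + Complex.I * y - (t : ℂ)).im = y := by simp
    rw [h] at this; simp at this; linarith
  have hcont : Continuous fun t : ℝ => (((x : ℂ) + Complex.I * y - (t : ℂ))⁻¹) := by
    apply Continuous.inv₀ (by continuity) hne
  apply (integrable_const (1/y)).mono' hcont.aestronglyMeasurable
  filter_upwards with t
  have hnorm : y ≤ ‖(x : ℂ) + Complex.I * y - (t : ℂ)‖ := by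
    calc y = |((x : ℂ) + Complex.I * y - (t : ℂ)).im| := by simp [abs_of_pos hy]
    _ ≤ _ := Complex.abs_im_le_norm _
  rw [norm_inv]
  rw [show (1:ℝ)/y = y⁻¹ by ring]
  exact inv_anti₀ hy hnorm

private lemma imch_part1 (μ : Measure ℝ) [IsProbabilityMeasure μ] (y a : ℝ) (hy : 0 < y)
    (ha : 0 < a) :
    (-(1 / π) * ∫ x in Set.Icc (-a) a,
        (∫ t : ℝ, (((x : ℂ) + Complex.I * y) - (t : ℂ))⁻¹ ∂μ).im)
      = (1 / π) * ∫ u : ℝ, (Real.arctan ((a - u) / y) + Real.arctan ((a + u) / y)) ∂μ := by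
  have step1 : ∀ x : ℝ, (∫ t : ℝ, (((x : ℂ) + Complex.I * y) - (t : ℂ))⁻¹ ∂μ).im
      = -∫ t : ℝ, y / ((x - t)^2 + y^2) ∂μ := by
    intro x
    rw [← RCLike.im_eq_complex_im, ← integral_im (imch_integrable_inv μ x y hy),
      ← MeasureTheory.integral_neg]
    congr 1; funext t
    rw [RCLike.im_eq_complex_im, imch_im_inv x t y]
  simp_rw [step1]
  rw [MeasureTheory.integral_neg, neg_mul, mul_neg, neg_neg]
  congr 1
  have hint : Integrable (fun p : ℝ × ℝ => y / ((p.1 - p.2)^2 + y^2))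
      ((volume.restrict (Set.Icc (-a) a)).prod μ) := by
    have hcont : Continuous (fun p : ℝ × ℝ => y / ((p.1 - p.2)^2 + y^2)) := by
      apply Continuous.div continuous_const (by continuity)
      intro p; positivity
    apply (integrable_const (1/y)).mono' hcont.aestronglyMeasurable
    filter_upwards with p
    rw [norm_of_nonneg (by positivity), div_le_div_iff₀ (by positivity) hy]
    nlinarith [sq_nonneg (p.1 - p.2)]
  rw [MeasureTheory.integral_integral_swap hint]
  congr 1; funext t
  exact imch_inner_int y hy a t ha

private lemma imch_part2 (μ : Measure ℝ) [IsProbabilityMeasure μ] (y a : ℝ) (hy : 0 < y)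
    (ha : 0 < a) :
    (1 / π) * (∫ u : ℝ, (Real.arctan ((a - u) / y) + Real.arctan ((a + u) / y)) ∂μ)
      ≤ (μ {u : ℝ | |u| ≤ 2 * a}).toReal + 1 - (1 / π) * Real.arctan (a / y) := by
  set A : Set ℝ := {u : ℝ | |u| ≤ 2 * a} with hA_def
  have hA : MeasurableSet A := measurableSet_le (continuous_abs.measurable) measurable_const
  set f : ℝ → ℝ := fun u => Real.arctan ((a - u) / y) + Real.arctan ((a + u) / y) with hf_def
  set g : ℝ → ℝ := fun u => A.indicator (fun _ => π) u + (π - Real.arctan (a / y)) with hg_def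
  have hfg : ∀ u, f u ≤ g u := by
    intro u
    simp only [hf_def, hg_def]
    by_cases h : u ∈ A
    · rw [Set.indicator_of_mem h]
      have h1 := Real.arctan_lt_pi_div_two ((a - u) / y)
      have h2 := Real.arctan_lt_pi_div_two ((a + u) / y)
      have h3 := Real.arctan_lt_pi_div_two (a / y)
      have := Real.pi_pos
      linarith
    · rw [Set.indicator_of_notMem h]
      simp only [hA_def, Set.mem_setOf_eq, not_le] at h
      rcases lt_abs.mp h with h' | h'
      · have hm : Real.arctan ((a - u) / y) ≤ Real.arctan (-(a / y)) := by
          apply Real.arctan_strictMono.monotone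
          rw [show -(a/y) = (-a)/y by ring, div_le_div_iff_of_pos_right hy]
          linarith
        rw [Real.arctan_neg] at hm
        have h2 := Real.arctan_lt_pi_div_two ((a + u) / y)
        have := Real.pi_pos
        linarith
      · have hm : Real.arctan ((a + u) / y) ≤ Real.arctan (-(a / y)) := by
          apply Real.arctan_strictMono.monotone
          rw [show -(a/y) = (-a)/y by ring, div_le_div_iff_of_pos_right hy]
          linarith
        rw [Real.arctan_neg] at hm
        have h2 := Real.arctan_lt_pi_div_two ((a - u) / y)
        have := Real.pi_pos
        linarith
  have hf_int : Integrable f μ := by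
    have hcont : Continuous f := by
      apply Continuous.add
      · exact Real.continuous_arctan.comp (by continuity)
      · exact Real.continuous_arctan.comp (by continuity)
    apply (integrable_const π).mono' hcont.aestronglyMeasurable
    filter_upwards with u
    have h1 := Real.arctan_lt_pi_div_two ((a - u) / y)
    have h2 := Real.arctan_lt_pi_div_two ((a + u) / y)
    have h3 := Real.neg_pi_div_two_lt_arctan ((a - u) / y)
    have h4 := Real.neg_pi_div_two_lt_arctan ((a + u) / y)
    rw [Real.norm_eq_abs, abs_le]
    constructor <;> simp only [hf_def] <;> linarith
  have hg_int : Integrable g μ := by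
    apply Integrable.add _ (integrable_const _)
    exact (integrable_const π).indicator hA
  have hle := integral_mono hf_int hg_int hfg
  have hg_val : ∫ u, g u ∂μ = π * (μ A).toReal + (π - Real.arctan (a / y)) := by
    rw [hg_def]
    rw [MeasureTheory.integral_add ((integrable_const π).indicator hA) (integrable_const _)]
    rw [MeasureTheory.integral_indicator_const _ hA, integral_const]
    simp [mul_comm]
    rfl
  rw [hg_val] at hle
  have hπ : (0:ℝ) < π := Real.pi_pos
  have hmul := mul_le_mul_of_nonneg_left hle (le_of_lt (by positivity : (0:ℝ) < 1/π))
  calc (1/π) * ∫ u, f u ∂μ ≤ (1/π) * (π * (μ A).toReal + (π - Real.arctan (a/y))) := hmul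
    _ = (μ A).toReal + 1 - (1/π) * Real.arctan (a/y) := by field_simp; ring

theorem im_cauchy_strip_integral
    (μ : Measure ℝ) [IsProbabilityMeasure μ] (y a : ℝ) (hy : 0 < y) (ha : 0 < a) :
    (-(1 / π) * ∫ x in Set.Icc (-a) a,
        (∫ t : ℝ, (((x : ℂ) + Complex.I * y) - (t : ℂ))⁻¹ ∂μ).im)
      = (1 / π) * ∫ u : ℝ, (Real.arctan ((a - u) / y) + Real.arctan ((a + u) / y)) ∂μ ∧
    (1 / π) * (∫ u : ℝ, (Real.arctan ((a - u) / y) + Real.arctan ((a + u) / y)) ∂μ)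
      ≤ (μ {u : ℝ | |u| ≤ 2 * a}).toReal + 1 - (1 / π) * Real.arctan (a / y) := by
  exact ⟨imch_part1 μ y a hy ha, imch_part2 μ y a hy ha⟩
end
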